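/- Under unconfoundedness of R given a discrete covariate X (conditional on Z), the principal strata proportions within covariate cells are identified: P(Y₀=0, Y₁=0 | X=x) = P(Y=0 | R=1, X=x), P(Y₀=1, Y₁=1 | X=x) = P(Y=1 | R=0, X=x), and P(Y₀=0, Y₁=1 | X=x) = P(Y=1 | R=1, X=x) − P(Y=1 | R=0, X=x), assuming also monotonicity Y₀ ≤ Y₁ and exclusion restriction. -/

import Mathlib

open Finset
open scoped Classical

namespace PS

/-- Probability of an event `A` under weight function `p` on a finite sample space. -/
noncomputable def Prob {Ω : Type*} [Fintype Ω] (p : Ω → ℝ) (A : Ω → Prop) : ℝ :=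
  ∑ ω ∈ Finset.univ.filter A, p ω

/-- Conditional probability `P(A | B)`. -/
noncomputable def CProb {Ω : Type*} [Fintype Ω] (p : Ω → ℝ) (A B : Ω → Prop) : ℝ :=
  Prob p (fun ω => A ω ∧ B ω) / Prob p B

/-- Conditional expectation `E[f | B]`. -/
noncomputable def CExp {Ω : Type*} [Fintype Ω] (p : Ω → ℝ) (f : Ω → ℝ) (B : Ω → Prop) : ℝ :=
  (∑ ω ∈ Finset.univ.filter B, p ω * f ω) / Prob p B

/-- Indicator of a Boolean value, as a real number. -/
def ind (b : Bool) : ℝ := if b then 1 else 0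

/-- Observed recommendation `R = R_Z`. -/
def obsR {Ω : Type*} (Z R₀ R₁ : Ω → Bool) (ω : Ω) : Bool := if Z ω then R₁ ω else R₀ ω

/-- Observed outcome `Y = Y_R` (exclusion restriction). -/
def obsY {Ω : Type*} (Rv Y₀ Y₁ : Ω → Bool) (ω : Ω) : Bool := if Rv ω then Y₁ ω else Y₀ ω

/-- `Z` is independent of the vector `(R₀, R₁, Y₀, Y₁)`. -/
def IndepZ {Ω : Type*} [Fintype Ω] (p : Ω → ℝ) (Z R₀ R₁ Y₀ Y₁ : Ω → Bool) : Prop :=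
  ∀ z a b c d : Bool,
    Prob p (fun ω => Z ω = z ∧ R₀ ω = a ∧ R₁ ω = b ∧ Y₀ ω = c ∧ Y₁ ω = d) =
      Prob p (fun ω => Z ω = z) *
        Prob p (fun ω => R₀ ω = a ∧ R₁ ω = b ∧ Y₀ ω = c ∧ Y₁ ω = d)

/-!
Within the cell `X = x`, unconfoundedness makes every principal stratum `(Y₀, Y₁) = (a, b)`
independent of `R`, so its share of the cell equals its share among the units with `R = r`,
for either `r` (overlap makes both arms non-null). Among treated units `Y = Y₁`, and
monotonicity rules out the stratum `(1, 0)`: `Y = 0` picks out `(0, 0)` and `Y = 1` the disjoint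
union of `(0, 1)` and `(1, 1)`. Among untreated units `Y = Y₀`, and `Y = 1` picks out `(1, 1)`.
-/

section Conditioning

variable {Ω : Type*} [Fintype Ω] (p : Ω → ℝ) {A A' B C : Ω → Prop}

theorem Prob_congr (h : ∀ ω, A ω ↔ A' ω) : Prob p A = Prob p A' := by
  simp only [Prob, Finset.filter_congr (fun ω _ => h ω)]

theorem Prob_or_of_disjoint (h : ∀ ω, A ω → ¬A' ω) :
    Prob p (fun ω => A ω ∨ A' ω) = Prob p A + Prob p A' := by
  simp only [Prob, Finset.sum_filter, ← Finset.sum_add_distrib]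
  refine Finset.sum_congr rfl fun ω _ => ?_
  by_cases hA : A ω
  · simp [hA, h ω hA]
  · simp [hA]

theorem Prob_and_add_Prob_not_and :
    Prob p (fun ω => A ω ∧ B ω) + Prob p (fun ω => ¬A ω ∧ B ω) = Prob p B := by
  rw [← Prob_or_of_disjoint p fun ω h h' => h'.1 h.1]
  exact Prob_congr p fun ω => by tauto

theorem Prob_ne_zero_of_CProb_ne_zero (h : CProb p A B ≠ 0) : Prob p B ≠ 0 := by
  rintro hB
  simp [CProb, hB] at h

theorem CProb_congr (h : ∀ ω, B ω → (A ω ↔ A' ω)) : CProb p A B = CProb p A' B := by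
  rw [CProb, CProb, Prob_congr p fun ω => and_congr_left (h ω)]

theorem CProb_or_of_disjoint (h : ∀ ω, A ω → ¬A' ω) :
    CProb p (fun ω => A ω ∨ A' ω) B = CProb p A B + CProb p A' B := by
  rw [CProb, CProb, CProb, ← add_div,
    ← Prob_or_of_disjoint p fun ω hA hA' => h ω hA.1 hA'.1]
  exact congrArg (· / _) (Prob_congr p fun ω => by tauto)

theorem CProb_not (hB : Prob p B ≠ 0) : CProb p (fun ω => ¬A ω) B = 1 - CProb p A B := by
  rw [CProb, CProb, eq_sub_iff_add_eq, ← add_div, add_comm, Prob_and_add_Prob_not_and,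
    div_self hB]

theorem CProb_and_cond_of_condIndep
    (hind : CProb p (fun ω => A ω ∧ C ω) B = CProb p A B * CProb p C B)
    (hC : CProb p C B ≠ 0) :
    CProb p A (fun ω => C ω ∧ B ω) = CProb p A B := by
  have hB := Prob_ne_zero_of_CProb_ne_zero p hC
  calc CProb p A (fun ω => C ω ∧ B ω)
      = CProb p (fun ω => A ω ∧ C ω) B / CProb p C B := by
        rw [CProb, CProb, CProb, div_div_div_cancel_right₀ hB,
          Prob_congr p fun ω => and_assoc]
    _ = CProb p A B := by rw [hind, mul_div_cancel_right₀ _ hC]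

end Conditioning

section ObservedOutcome

variable {Ω : Type*} {R Y₀ Y₁ : Ω → Bool} {ω : Ω}

theorem obsY_eq_false_iff_of_treated (hmono : Y₀ ω = true → Y₁ ω = true) (hr : R ω = true) :
    obsY R Y₀ Y₁ ω = false ↔ Y₀ ω = false ∧ Y₁ ω = false := by
  simp only [obsY, hr, if_true]
  revert hmono
  cases Y₀ ω <;> cases Y₁ ω <;> simp

theorem obsY_eq_true_iff_of_untreated (hmono : Y₀ ω = true → Y₁ ω = true) (hr : R ω = false) :
    obsY R Y₀ Y₁ ω = true ↔ Y₀ ω = true ∧ Y₁ ω = true := by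
  simp only [obsY, hr]
  revert hmono
  cases Y₀ ω <;> cases Y₁ ω <;> simp

theorem obsY_eq_true_iff_of_treated (hr : R ω = true) :
    obsY R Y₀ Y₁ ω = true ↔ (Y₀ ω = true ∧ Y₁ ω = true) ∨ (Y₀ ω = false ∧ Y₁ ω = true) := by
  cases Y₀ ω <;> simp [obsY, hr]

end ObservedOutcome

theorem stmt16_general {Ω : Type*} [Fintype Ω] {ι : Type*}
    (p : Ω → ℝ) (R Y₀ Y₁ : Ω → Bool) (X : Ω → ι)
    (hunconf : ∀ (x : ι) (a b r : Bool),
      CProb p (fun ω => Y₀ ω = a ∧ Y₁ ω = b ∧ R ω = r) (fun ω => X ω = x) =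
        CProb p (fun ω => Y₀ ω = a ∧ Y₁ ω = b) (fun ω => X ω = x) *
          CProb p (fun ω => R ω = r) (fun ω => X ω = x))
    (hoverlap : ∀ x : ι, 0 < CProb p (fun ω => R ω = true) (fun ω => X ω = x) ∧
      CProb p (fun ω => R ω = true) (fun ω => X ω = x) < 1)
    (hmono : ∀ ω, Y₀ ω = true → Y₁ ω = true) :
    ∀ x : ι,
      CProb p (fun ω => Y₀ ω = false ∧ Y₁ ω = false) (fun ω => X ω = x) =
        CProb p (fun ω => obsY R Y₀ Y₁ ω = false) (fun ω => R ω = true ∧ X ω = x) ∧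
      CProb p (fun ω => Y₀ ω = true ∧ Y₁ ω = true) (fun ω => X ω = x) =
        CProb p (fun ω => obsY R Y₀ Y₁ ω = true) (fun ω => R ω = false ∧ X ω = x) ∧
      CProb p (fun ω => Y₀ ω = false ∧ Y₁ ω = true) (fun ω => X ω = x) =
        CProb p (fun ω => obsY R Y₀ Y₁ ω = true) (fun ω => R ω = true ∧ X ω = x) -
          CProb p (fun ω => obsY R Y₀ Y₁ ω = true) (fun ω => R ω = false ∧ X ω = x) := by
  intro x
  obtain ⟨htreated, huntreated⟩ := hoverlap x
  have hcell := Prob_ne_zero_of_CProb_ne_zero p htreated.ne'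
  have hR : ∀ r, CProb p (fun ω => R ω = r) (fun ω => X ω = x) ≠ 0
    | true => htreated.ne'
    | false => by
      rw [CProb_congr p fun ω _ => Bool.eq_false_iff, CProb_not p hcell]
      linarith
  have hstratum : ∀ a b r, CProb p (fun ω => Y₀ ω = a ∧ Y₁ ω = b) (fun ω => R ω = r ∧ X ω = x) =
      CProb p (fun ω => Y₀ ω = a ∧ Y₁ ω = b) (fun ω => X ω = x) := fun a b r =>
    CProb_and_cond_of_condIndep p (by simpa only [and_assoc] using hunconf x a b r) (hR r)
  have hY0_treated : CProb p (fun ω => obsY R Y₀ Y₁ ω = false) (fun ω => R ω = true ∧ X ω = x) =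
      CProb p (fun ω => Y₀ ω = false ∧ Y₁ ω = false) (fun ω => R ω = true ∧ X ω = x) :=
    CProb_congr p fun ω h => obsY_eq_false_iff_of_treated (hmono ω) h.1
  have hY1_untreated : CProb p (fun ω => obsY R Y₀ Y₁ ω = true) (fun ω => R ω = false ∧ X ω = x) =
      CProb p (fun ω => Y₀ ω = true ∧ Y₁ ω = true) (fun ω => R ω = false ∧ X ω = x) :=
    CProb_congr p fun ω h => obsY_eq_true_iff_of_untreated (hmono ω) h.1
  have hY1_treated : CProb p (fun ω => obsY R Y₀ Y₁ ω = true) (fun ω => R ω = true ∧ X ω = x) =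
      CProb p (fun ω => Y₀ ω = true ∧ Y₁ ω = true) (fun ω => R ω = true ∧ X ω = x) +
        CProb p (fun ω => Y₀ ω = false ∧ Y₁ ω = true) (fun ω => R ω = true ∧ X ω = x) := by
    rw [← CProb_or_of_disjoint p fun ω h h' => by simp [h.1] at h']
    exact CProb_congr p fun ω h => obsY_eq_true_iff_of_treated h.1
  refine ⟨?_, ?_, ?_⟩
  · rw [hY0_treated, hstratum]
  · rw [hY1_untreated, hstratum]
  · rw [hY1_treated, hY1_untreated, hstratum, hstratum, hstratum]
    ring

theorem stmt16 {Ω : Type*} [Fintype Ω] {ι : Type*} [Fintype ι]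
    (p : Ω → ℝ) (R Y₀ Y₁ : Ω → Bool) (X : Ω → ι)
    (hp : ∀ ω, 0 ≤ p ω) (hsum : ∑ ω, p ω = 1)
    (hX : ∀ x : ι, 0 < Prob p (fun ω => X ω = x))
    (hunconf : ∀ (x : ι) (a b r : Bool),
      CProb p (fun ω => Y₀ ω = a ∧ Y₁ ω = b ∧ R ω = r) (fun ω => X ω = x) =
        CProb p (fun ω => Y₀ ω = a ∧ Y₁ ω = b) (fun ω => X ω = x) *
          CProb p (fun ω => R ω = r) (fun ω => X ω = x))
    (hoverlap : ∀ x : ι, 0 < CProb p (fun ω => R ω = true) (fun ω => X ω = x) ∧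
      CProb p (fun ω => R ω = true) (fun ω => X ω = x) < 1)
    (hmono : ∀ ω, Y₀ ω = true → Y₁ ω = true) :
    ∀ x : ι,
      CProb p (fun ω => Y₀ ω = false ∧ Y₁ ω = false) (fun ω => X ω = x) =
        CProb p (fun ω => obsY R Y₀ Y₁ ω = false) (fun ω => R ω = true ∧ X ω = x) ∧
      CProb p (fun ω => Y₀ ω = true ∧ Y₁ ω = true) (fun ω => X ω = x) =
        CProb p (fun ω => obsY R Y₀ Y₁ ω = true) (fun ω => R ω = false ∧ X ω = x) ∧
      CProb p (fun ω => Y₀ ω = false ∧ Y₁ ω = true) (fun ω => X ω = x) =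
        CProb p (fun ω => obsY R Y₀ Y₁ ω = true) (fun ω => R ω = true ∧ X ω = x) -
          CProb p (fun ω => obsY R Y₀ Y₁ ω = true) (fun ω => R ω = false ∧ X ω = x) :=
  stmt16_general p R Y₀ Y₁ X hunconf hoverlap hmono

end PS
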